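/- Let {φ(θ), θ ∈ T_0} be an admissible family of nonnegative random variables and for each stopping time S ∈ T_0 let v(S) = ess sup_{θ ∈ T_S} E[φ(θ) | F_S]. Then {v(S), S ∈ T_0} is a supermartingale system: for any stopping time S ∈ T_0 and any stopping times θ, θ' ∈ T_S with θ ≥ θ' a.s., one has E[v(θ) | F_{θ'}] ≤ v(θ') almost surely. -/

import Mathlib

open MeasureTheory Filter Set Topology

variable {Ω : Type*}

/-- `τ` belongs to `T_0`: it is a stopping time of `𝓕` with values in `[0, T]`. -/
def MemT0 {m0 : MeasurableSpace Ω} (𝓕 : MeasureTheory.Filtration ℝ m0) (T : ℝ)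
    (τ : Ω → ℝ) : Prop :=
  MeasureTheory.IsStoppingTime 𝓕 (fun ω => (τ ω : WithTop ℝ)) ∧ ∀ ω, τ ω ∈ Set.Icc (0 : ℝ) T

/-- `v` is an essential supremum of the family `f i`, `i` ranging over `{i | P i}`:
it dominates every member a.s. and is a.s. below any other a.s. upper bound. -/
def IsEssSupFam {m0 : MeasurableSpace Ω} (μ : MeasureTheory.Measure Ω) {ι : Sort*}
    (P : ι → Prop) (f : ι → Ω → ℝ) (v : Ω → ℝ) : Prop :=
  (∀ i, P i → f i ≤ᵐ[μ] v) ∧ ∀ w : Ω → ℝ, (∀ i, P i → f i ≤ᵐ[μ] w) → v ≤ᵐ[μ] w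

/-- `v` is an essential infimum of the family `f i`, `i` ranging over `{i | P i}`. -/
def IsEssInfFam {m0 : MeasurableSpace Ω} (μ : MeasureTheory.Measure Ω) {ι : Sort*}
    (P : ι → Prop) (f : ι → Ω → ℝ) (v : Ω → ℝ) : Prop :=
  (∀ i, P i → v ≤ᵐ[μ] f i) ∧ ∀ w : Ω → ℝ, (∀ i, P i → w ≤ᵐ[μ] f i) → w ≤ᵐ[μ] v

/-- An admissible family of nonnegative random variables indexed by the stopping
times in `T_0`: `φ τ` is a nonnegative `F_τ`-measurable random variable, and
`φ τ = φ τ'` a.s. on `{τ = τ'}`. -/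
def Admissible {m0 : MeasurableSpace Ω} (𝓕 : MeasureTheory.Filtration ℝ m0) (T : ℝ)
    (μ : MeasureTheory.Measure Ω) (φ : (Ω → ℝ) → Ω → ℝ) : Prop :=
  (∀ τ (hτ : MemT0 𝓕 T τ),
      Measurable[hτ.1.measurableSpace] (φ τ) ∧ ∀ ω, 0 ≤ φ τ ω) ∧
  ∀ τ τ', MemT0 𝓕 T τ → MemT0 𝓕 T τ' →
    ∀ᵐ ω ∂μ, τ ω = τ' ω → φ τ ω = φ τ' ω

/-- An a.e. variant of admissibility (for families defined only up to a.s. equality,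
such as value-function families): `φ τ` is a.s. nonnegative and a.s. equal to some
`F_τ`-measurable random variable, and `φ τ = φ τ'` a.s. on `{τ = τ'}`. -/
def AdmissibleAE {m0 : MeasurableSpace Ω} (𝓕 : MeasureTheory.Filtration ℝ m0) (T : ℝ)
    (μ : MeasureTheory.Measure Ω) (φ : (Ω → ℝ) → Ω → ℝ) : Prop :=
  (∀ τ (hτ : MemT0 𝓕 T τ),
      (∀ᵐ ω ∂μ, 0 ≤ φ τ ω) ∧
      ∃ w : Ω → ℝ, Measurable[hτ.1.measurableSpace] w ∧ φ τ =ᵐ[μ] w) ∧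
  ∀ τ τ', MemT0 𝓕 T τ → MemT0 𝓕 T τ' →
    ∀ᵐ ω ∂μ, τ ω = τ' ω → φ τ ω = φ τ' ω

/-- A biadmissible family: `ψ τ S` is a nonnegative `F_{τ ∨ S}`-measurable random
variable, and `ψ τ S = ψ τ' S'` a.s. on `{τ = τ'} ∩ {S = S'}`. -/
def Biadmissible {m0 : MeasurableSpace Ω} (𝓕 : MeasureTheory.Filtration ℝ m0) (T : ℝ)
    (μ : MeasureTheory.Measure Ω) (ψ : (Ω → ℝ) → (Ω → ℝ) → Ω → ℝ) : Prop :=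
  (∀ τ S (hτ : MemT0 𝓕 T τ) (hS : MemT0 𝓕 T S),
      Measurable[(hτ.1.max hS.1).measurableSpace] (ψ τ S) ∧ ∀ ω, 0 ≤ ψ τ S ω) ∧
  ∀ τ τ' S S', MemT0 𝓕 T τ → MemT0 𝓕 T τ' → MemT0 𝓕 T S → MemT0 𝓕 T S' →
    ∀ᵐ ω ∂μ, τ ω = τ' ω → S ω = S' ω → ψ τ S ω = ψ τ' S' ω

/-- `θn ↓ θ` a.s.: the sequence is a.s. nonincreasing and converges a.s. to `θ`. -/
def DownAS {m0 : MeasurableSpace Ω} (μ : MeasureTheory.Measure Ω)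
    (θn : ℕ → Ω → ℝ) (θ : Ω → ℝ) : Prop :=
  ∀ᵐ ω ∂μ, (∀ n, θn (n + 1) ω ≤ θn n ω) ∧
    Filter.Tendsto (fun n => θn n ω) Filter.atTop (nhds (θ ω))

/-- `θn ↑ θ` a.s.: the sequence is a.s. nondecreasing and converges a.s. to `θ`. -/
def UpAS {m0 : MeasurableSpace Ω} (μ : MeasureTheory.Measure Ω)
    (θn : ℕ → Ω → ℝ) (θ : Ω → ℝ) : Prop :=
  ∀ᵐ ω ∂μ, (∀ n, θn n ω ≤ θn (n + 1) ω) ∧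
    Filter.Tendsto (fun n => θn n ω) Filter.atTop (nhds (θ ω))

/-- The family `φ` is right continuous along stopping times in expectation. -/
def RCE {m0 : MeasurableSpace Ω} (𝓕 : MeasureTheory.Filtration ℝ m0) (T : ℝ)
    (μ : MeasureTheory.Measure Ω) (φ : (Ω → ℝ) → Ω → ℝ) : Prop :=
  ∀ θ, MemT0 𝓕 T θ → ∀ θn : ℕ → Ω → ℝ, (∀ n, MemT0 𝓕 T (θn n)) → DownAS μ θn θ →
    Filter.Tendsto (fun n => ∫ ω, φ (θn n) ω ∂μ) Filter.atTop (nhds (∫ ω, φ θ ω ∂μ))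

/-- The family `φ` is left continuous along stopping times in expectation. -/
def LCE {m0 : MeasurableSpace Ω} (𝓕 : MeasureTheory.Filtration ℝ m0) (T : ℝ)
    (μ : MeasureTheory.Measure Ω) (φ : (Ω → ℝ) → Ω → ℝ) : Prop :=
  ∀ θ, MemT0 𝓕 T θ → ∀ θn : ℕ → Ω → ℝ, (∀ n, MemT0 𝓕 T (θn n)) → UpAS μ θn θ →
    Filter.Tendsto (fun n => ∫ ω, φ (θn n) ω ∂μ) Filter.atTop (nhds (∫ ω, φ θ ω ∂μ))

/-- The biadmissible family `ψ` is uniformly right continuous in expectation along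
stopping times: for `S_n ↓ S` a.s. (all in `T_0`), the expectation of the essential
supremum over `θ ∈ T_0` of `|ψ(θ, S) - ψ(θ, S_n)|` (resp. `|ψ(S, θ) - ψ(S_n, θ)|`)
tends to `0`. -/
def URCE {m0 : MeasurableSpace Ω} (𝓕 : MeasureTheory.Filtration ℝ m0) (T : ℝ)
    (μ : MeasureTheory.Measure Ω) (ψ : (Ω → ℝ) → (Ω → ℝ) → Ω → ℝ) : Prop :=
  ∀ S, MemT0 𝓕 T S → ∀ Sn : ℕ → Ω → ℝ, (∀ n, MemT0 𝓕 T (Sn n)) → DownAS μ Sn S →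
    (∀ D : ℕ → Ω → ℝ,
      (∀ n, IsEssSupFam μ (MemT0 𝓕 T) (fun θ ω => |ψ θ S ω - ψ θ (Sn n) ω|) (D n)) →
      Filter.Tendsto (fun n => ∫ ω, D n ω ∂μ) Filter.atTop (nhds 0)) ∧
    ∀ D : ℕ → Ω → ℝ,
      (∀ n, IsEssSupFam μ (MemT0 𝓕 T) (fun θ ω => |ψ S θ ω - ψ (Sn n) θ ω|) (D n)) →
      Filter.Tendsto (fun n => ∫ ω, D n ω ∂μ) Filter.atTop (nhds 0)

/-- The biadmissible family `ψ` is uniformly left continuous in expectation along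
stopping times. -/
def ULCE {m0 : MeasurableSpace Ω} (𝓕 : MeasureTheory.Filtration ℝ m0) (T : ℝ)
    (μ : MeasureTheory.Measure Ω) (ψ : (Ω → ℝ) → (Ω → ℝ) → Ω → ℝ) : Prop :=
  ∀ S, MemT0 𝓕 T S → ∀ Sn : ℕ → Ω → ℝ, (∀ n, MemT0 𝓕 T (Sn n)) → UpAS μ Sn S →
    (∀ D : ℕ → Ω → ℝ,
      (∀ n, IsEssSupFam μ (MemT0 𝓕 T) (fun θ ω => |ψ θ S ω - ψ θ (Sn n) ω|) (D n)) →
      Filter.Tendsto (fun n => ∫ ω, D n ω ∂μ) Filter.atTop (nhds 0)) ∧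
    ∀ D : ℕ → Ω → ℝ,
      (∀ n, IsEssSupFam μ (MemT0 𝓕 T) (fun θ ω => |ψ S θ ω - ψ (Sn n) θ ω|) (D n)) →
      Filter.Tendsto (fun n => ∫ ω, D n ω ∂μ) Filter.atTop (nhds 0)

/-!
The conditional expectations `E[φ(σ) | F_θ]`, `σ ∈ T_θ`, form an upward directed family: given
`σ₁` and `σ₂`, the stopping time equal to `σ₁` where its conditional expectation is the larger one
and to `σ₂` elsewhere dominates both (after replacing `σᵢ` by `σᵢ ∨ θ`, so that pasting along an
`F_θ`-set gives a stopping time). An essential supremum of a directed family of integrable functions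
is approached in mean by a sequence of its members, here `E[φ(ρₙ) | F_θ]`. Then
`E[v(θ) | F_θ'] - E[φ(ρₙ) | F_θ']` is nonnegative with integral tending to `0`, while
`E[φ(ρₙ) | F_θ'] ≤ v(θ')` by the tower property (`F_θ' ⊆ F_θ` because `θ' ≤ θ` off a null set,
and null sets lie in `F_0`). A subsequence tends to `0` a.s., which gives `E[v(θ) | F_θ'] ≤ v(θ')`.
If `v(θ)` is not integrable, Mathlib's `E[v(θ) | F_θ']` is `0` and the claim is `v(θ') ≥ 0`.
-/

theorem DirectedOn.exists_seq_rel_succ {α : Type*} {r : α → α → Prop} {s : Set α}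
    (hs : DirectedOn r s) {x : ℕ → α} (hx : ∀ n, x n ∈ s) :
    ∃ y : ℕ → α, (∀ n, y n ∈ s) ∧ (∀ n, r (y n) (y (n + 1))) ∧ ∀ n, r (x n) (y (n + 1)) := by
  choose! u hu_mem hu_left hu_right using hs
  let y : ℕ → α := fun n => Nat.rec (x 0) (fun n yn => u yn (x n)) n
  have hy_mem : ∀ n, y n ∈ s := fun n => by
    induction n with
    | zero => exact hx 0
    | succ n ih => exact hu_mem _ ih _ (hx n)
  exact ⟨y, hy_mem, fun n => hu_left _ (hy_mem n) _ (hx n),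
    fun n => hu_right _ (hy_mem n) _ (hx n)⟩

section EssSupFam

variable [MeasurableSpace Ω] {μ : Measure Ω}

theorem ae_nonpos_of_forall_ae_le_of_tendsto_integral {f : Ω → ℝ} {h : ℕ → Ω → ℝ}
    (h_int : ∀ n, Integrable (h n) μ) (h_nonneg : ∀ n, 0 ≤ᵐ[μ] h n)
    (hf : ∀ n, f ≤ᵐ[μ] h n) (h_lim : Tendsto (fun n => ∫ ω, h n ω ∂μ) atTop (𝓝 0)) :
    f ≤ᵐ[μ] 0 := by
  have h_inMeasure : TendstoInMeasure μ h atTop 0 := by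
    refine tendstoInMeasure_of_tendsto_eLpNorm one_ne_zero
      (fun n => (h_int n).aestronglyMeasurable) aestronglyMeasurable_zero ?_
    have h_norm : ∀ n, eLpNorm (h n) 1 μ = ENNReal.ofReal (∫ ω, h n ω ∂μ) := fun n => by
      rw [eLpNorm_one_eq_lintegral_enorm,
        ofReal_integral_eq_lintegral_ofReal (h_int n) (h_nonneg n)]
      refine lintegral_congr_ae ((h_nonneg n).mono fun ω hω => ?_)
      exact Real.enorm_of_nonneg hω
    simpa only [sub_zero, h_norm, ENNReal.ofReal_zero] using ENNReal.tendsto_ofReal h_lim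
  obtain ⟨ns, -, h_ae⟩ := h_inMeasure.exists_seq_tendsto_ae
  filter_upwards [h_ae, ae_all_iff.2 fun n => hf (ns n)] with ω hω hle
  exact ge_of_tendsto' hω hle

theorem exists_integrable_tendsto_integral_of_ae_mono {g : ℕ → Ω → ℝ} {V : Ω → ℝ}
    (hg_int : ∀ n, Integrable (g n) μ) (hV_int : Integrable V μ)
    (hg_mono : ∀ n, g n ≤ᵐ[μ] g (n + 1)) (hgV : ∀ n, g n ≤ᵐ[μ] V) :
    ∃ G : Ω → ℝ, Integrable G μ ∧ (∀ n, g n ≤ᵐ[μ] G) ∧ G ≤ᵐ[μ] V ∧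
      Tendsto (fun n => ∫ ω, g n ω ∂μ) atTop (𝓝 (∫ ω, G ω ∂μ)) := by
  have h_ae : ∀ᵐ ω ∂μ, Monotone (fun n => g n ω) ∧ ∀ n, g n ω ≤ V ω := by
    filter_upwards [ae_all_iff.2 hg_mono, ae_all_iff.2 hgV] with ω h_mono hV
    exact ⟨monotone_nat_of_le_succ h_mono, hV⟩
  have h_bdd : ∀ᵐ ω ∂μ, BddAbove (Set.range fun n => g n ω) :=
    h_ae.mono fun ω hω => ⟨V ω, Set.forall_mem_range.2 hω.2⟩
  let G : Ω → ℝ := fun ω => ⨆ n, g n ω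
  have h_tendsto : ∀ᵐ ω ∂μ, Tendsto (fun n => g n ω) atTop (𝓝 (G ω)) := by
    filter_upwards [h_ae, h_bdd] with ω hω h_bdd
    exact tendsto_atTop_ciSup hω.1 h_bdd
  have hgG : ∀ n, g n ≤ᵐ[μ] G := fun n => h_bdd.mono fun ω hω => le_ciSup hω n
  have hGV : G ≤ᵐ[μ] V := h_ae.mono fun ω hω => ciSup_le hω.2
  have hG_int : Integrable G μ := by
    refine Integrable.mono' ((hg_int 0).abs.add hV_int.abs)
      (aestronglyMeasurable_of_tendsto_ae _ (fun n => (hg_int n).aestronglyMeasurable) h_tendsto)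
      ?_
    filter_upwards [hgG 0, hGV] with ω h0 hV
    rw [Real.norm_eq_abs, abs_le, Pi.add_apply]
    constructor <;> linarith [neg_abs_le (g 0 ω), le_abs_self (V ω), abs_nonneg (g 0 ω),
      abs_nonneg (V ω)]
  exact ⟨G, hG_int, hgG, hGV,
    integral_tendsto_of_tendsto_of_monotone hg_int hG_int (h_ae.mono fun _ h => h.1) h_tendsto⟩

variable {ι : Type*} {P : ι → Prop} {f : ι → Ω → ℝ}

theorem DirectedOn.exists_seq_ae_mono_tendsto_sSup_integral
    (hdir : DirectedOn (Function.onFun (· ≤ᵐ[μ] ·) f) {i | P i})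
    (hf_int : ∀ i, P i → Integrable (f i) μ) (hne : ∃ i, P i)
    (hbdd : BddAbove ((fun i => ∫ ω, f i ω ∂μ) '' {i | P i})) :
    ∃ ρ : ℕ → ι, (∀ n, P (ρ n)) ∧ (∀ n, f (ρ n) ≤ᵐ[μ] f (ρ (n + 1))) ∧
      Tendsto (fun n => ∫ ω, f (ρ n) ω ∂μ) atTop
        (𝓝 (sSup ((fun i => ∫ ω, f i ω ∂μ) '' {i | P i}))) := by
  obtain ⟨u, -, hu_lim, hu_mem⟩ := exists_seq_tendsto_sSup (Set.Nonempty.image _ hne) hbdd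
  choose x hxP hxu using hu_mem
  obtain ⟨ρ, hρP, hρ_mono, hxρ⟩ := hdir.exists_seq_rel_succ hxP
  refine ⟨ρ, hρP, hρ_mono, (tendsto_add_atTop_iff_nat 1).1 ?_⟩
  refine tendsto_of_tendsto_of_tendsto_of_le_of_le hu_lim tendsto_const_nhds (fun n => ?_)
    (fun n => le_csSup hbdd ⟨_, hρP _, rfl⟩)
  rw [← hxu n]
  exact integral_mono_ae (hf_int _ (hxP n)) (hf_int _ (hρP _)) (hxρ n)

theorem IsEssSupFam.exists_seq_tendsto_integral {V : Ω → ℝ} (hV : IsEssSupFam μ P f V)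
    (hV_int : Integrable V μ) (hf_int : ∀ i, P i → Integrable (f i) μ)
    (hdir : DirectedOn (Function.onFun (· ≤ᵐ[μ] ·) f) {i | P i}) (hne : ∃ i, P i) :
    ∃ ρ : ℕ → ι, (∀ n, P (ρ n)) ∧
      Tendsto (fun n => ∫ ω, f (ρ n) ω ∂μ) atTop (𝓝 (∫ ω, V ω ∂μ)) := by
  have hbdd : BddAbove ((fun i => ∫ ω, f i ω ∂μ) '' {i | P i}) := by
    refine ⟨∫ ω, V ω ∂μ, ?_⟩
    rintro _ ⟨i, hi, rfl⟩
    exact integral_mono_ae (hf_int i hi) hV_int (hV.1 i hi)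
  obtain ⟨ρ, hρP, hρ_mono, hρ_lim⟩ :=
    hdir.exists_seq_ae_mono_tendsto_sSup_integral hf_int hne hbdd
  set c := sSup ((fun i => ∫ ω, f i ω ∂μ) '' {i | P i})
  obtain ⟨G, hG_int, hρG, hGV, hG_lim⟩ := exists_integrable_tendsto_integral_of_ae_mono
    (fun n => hf_int _ (hρP n)) hV_int hρ_mono (fun n => hV.1 _ (hρP n))
  have hGc : ∫ ω, G ω ∂μ = c := tendsto_nhds_unique hG_lim hρ_lim
  -- `f i ≤ G`: an upper bound `k n` of `i` and `ρ n` gains at most `c - ∫ f (ρ n) → 0` on `ρ n`.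
  have hG_ub : ∀ i, P i → f i ≤ᵐ[μ] G := by
    intro i hi
    choose k hkP hik hρk using fun n => hdir i hi (ρ n) (hρP n)
    have h_int : ∀ n, Integrable (f (k n) - f (ρ n)) μ :=
      fun n => (hf_int _ (hkP n)).sub (hf_int _ (hρP n))
    have h_gap : ∀ n, ∫ ω, (f (k n) - f (ρ n)) ω ∂μ ≤ c - ∫ ω, f (ρ n) ω ∂μ := fun n => by
      rw [integral_sub' (hf_int _ (hkP n)) (hf_int _ (hρP n))]
      linarith [le_csSup hbdd ⟨k n, hkP n, rfl⟩]
    have h_nonneg : ∀ n, 0 ≤ᵐ[μ] f (k n) - f (ρ n) :=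
      fun n => (hρk n).mono fun ω hω => sub_nonneg.2 hω
    have h_lim : Tendsto (fun n => c - ∫ ω, f (ρ n) ω ∂μ) atTop (𝓝 0) := by
      simpa only [sub_self] using (tendsto_const_nhds (x := c)).sub hρ_lim
    have h_le := ae_nonpos_of_forall_ae_le_of_tendsto_integral (f := f i - G) h_int h_nonneg
      (fun n => by
        filter_upwards [hik n, hρG n] with ω h1 h2
        simp only [Pi.sub_apply]
        linarith)
      (tendsto_of_tendsto_of_tendsto_of_le_of_le tendsto_const_nhds h_lim
        (fun n => integral_nonneg_of_ae (h_nonneg n)) h_gap)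
    exact h_le.mono fun ω hω => sub_nonpos.1 hω
  have hVG : V =ᵐ[μ] G := (hV.2 G hG_ub).antisymm hGV
  exact ⟨ρ, hρP, by rwa [integral_congr_ae hVG, hGc]⟩

end EssSupFam

section CondExp

variable {m m0 : MeasurableSpace Ω} {μ : Measure Ω}

theorem condExp_piecewise {f g : Ω → ℝ} {s : Set Ω} [DecidablePred (· ∈ s)]
    (hs : MeasurableSet[m] s) (hf : Integrable f μ) (hg : Integrable g μ) :
    μ[s.piecewise f g | m] =ᵐ[μ] s.piecewise (μ[f | m]) (μ[g | m]) := by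
  by_cases hm : m ≤ m0
  · rw [← Set.indicator_add_compl_eq_piecewise, ← Set.indicator_add_compl_eq_piecewise]
    exact (condExp_add (hf.indicator (hm s hs)) (hg.indicator (hm _ hs.compl)) m).trans
      ((condExp_indicator hf hs).add (condExp_indicator hg hs.compl))
  · simp_rw [condExp_of_not_le hm, Set.piecewise_same]
    rfl

variable {ι : Type*} {P : ι → Prop} {f : ι → Ω → ℝ}

theorem IsEssSupFam.condExp_ae_le {V W : Ω → ℝ} (hm : m ≤ m0) [SigmaFinite (μ.trim hm)]
    (hV : IsEssSupFam μ P f V) (hV_int : Integrable V μ) (hf_int : ∀ i, P i → Integrable (f i) μ)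
    (hdir : DirectedOn (Function.onFun (· ≤ᵐ[μ] ·) f) {i | P i}) (hne : ∃ i, P i)
    (hW : ∀ i, P i → μ[f i | m] ≤ᵐ[μ] W) :
    μ[V | m] ≤ᵐ[μ] W := by
  obtain ⟨ρ, hρP, hρ_lim⟩ := hV.exists_seq_tendsto_integral hV_int hf_int hdir hne
  have h_nonneg : ∀ n, 0 ≤ᵐ[μ] μ[V - f (ρ n) | m] := fun n =>
    condExp_nonneg ((hV.1 _ (hρP n)).mono fun ω hω => sub_nonneg.2 hω)
  have h_le : ∀ n, μ[V | m] - W ≤ᵐ[μ] μ[V - f (ρ n) | m] := fun n => by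
    filter_upwards [condExp_sub hV_int (hf_int _ (hρP n)) m, hW _ (hρP n)] with ω h_sub hω
    simp only [h_sub, Pi.sub_apply]
    linarith
  have h_lim : Tendsto (fun n => ∫ ω, μ[V - f (ρ n) | m] ω ∂μ) atTop (𝓝 0) := by
    have h_eq : ∀ n, ∫ ω, μ[V - f (ρ n) | m] ω ∂μ = ∫ ω, V ω ∂μ - ∫ ω, f (ρ n) ω ∂μ :=
      fun n => by rw [integral_condExp hm, integral_sub' hV_int (hf_int _ (hρP n))]
    simpa only [h_eq, sub_self] using (tendsto_const_nhds (x := ∫ ω, V ω ∂μ)).sub hρ_lim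
  exact (ae_nonpos_of_forall_ae_le_of_tendsto_integral (fun _ => integrable_condExp) h_nonneg
    h_le h_lim).mono fun ω hω => sub_nonpos.1 hω

end CondExp

namespace MeasureTheory.IsStoppingTime

variable {m0 : MeasurableSpace Ω} {ι : Type*} [Preorder ι] {𝓕 : Filtration ι m0}

theorem measurableSpace_le_of_ae_le {μ : Measure Ω} {i₀ : ι}
    (h_null : ∀ A : Set Ω, μ A = 0 → MeasurableSet[𝓕 i₀] A) {τ σ : Ω → WithTop ι}
    (hτ : IsStoppingTime 𝓕 τ) (hσ : IsStoppingTime 𝓕 σ) (hσ_ge : ∀ ω, ↑i₀ ≤ σ ω)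
    (hle : τ ≤ᵐ[μ] σ) :
    hτ.measurableSpace ≤ hσ.measurableSpace := by
  intro A hA
  refine ⟨hA.1, fun t => ?_⟩
  -- off the null set `N` where `τ ≤ σ` fails, `σ ≤ t` forces `τ ≤ t`
  set N := {ω | ¬τ ω ≤ σ ω}
  have h_split : A ∩ {ω | σ ω ≤ t} =
      A ∩ {ω | τ ω ≤ t} ∩ {ω | σ ω ≤ t} ∪ A ∩ {ω | σ ω ≤ t} ∩ N := by
    ext ω
    simp only [mem_union, mem_inter_iff, mem_ofPred_eq, N]
    by_cases hω : τ ω ≤ σ ω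
    · have := fun h : σ ω ≤ t => hω.trans h
      tauto
    · tauto
  rw [h_split]
  refine ((hA.2 t).inter (hσ t)).union ?_
  by_cases ht : i₀ ≤ t
  · exact 𝓕.mono ht _ (h_null _ (measure_mono_null inter_subset_right (ae_iff.1 hle)))
  · have h_empty : {ω | σ ω ≤ t} = ∅ :=
      eq_empty_of_forall_notMem fun ω h => ht (WithTop.coe_le_coe.1 ((hσ_ge ω).trans h))
    simp [h_empty]

theorem piecewise_of_le_of_measurableSet {τ η ρ : Ω → WithTop ι} {s : Set Ω}
    [DecidablePred (· ∈ s)] (hτ : IsStoppingTime 𝓕 τ) (hη : IsStoppingTime 𝓕 η)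
    (hρ : IsStoppingTime 𝓕 ρ) (hρτ : ρ ≤ τ) (hρη : ρ ≤ η)
    (hs : MeasurableSet[hρ.measurableSpace] s) :
    IsStoppingTime 𝓕 (s.piecewise τ η) := by
  intro t
  have h_eq : {ω | s.piecewise τ η ω ≤ t} = s ∩ {ω | τ ω ≤ t} ∪ sᶜ ∩ {ω | η ω ≤ t} := by
    ext ω
    by_cases hω : ω ∈ s <;> simp [hω]
  rw [h_eq]
  exact ((hρ.measurableSpace_mono hτ hρτ s hs).2 t).union
    ((hρ.measurableSpace_mono hη hρη _ hs.compl).2 t)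

end MeasureTheory.IsStoppingTime

section StoppingTimes

variable {m0 : MeasurableSpace Ω} {𝓕 : Filtration ℝ m0} {T : ℝ} {μ : Measure Ω}

theorem MemT0.exists_ae_eq_forall_le {σ θ : Ω → ℝ} (hσ : MemT0 𝓕 T σ) (hθ : MemT0 𝓕 T θ)
    (h : θ ≤ᵐ[μ] σ) : ∃ σ', MemT0 𝓕 T σ' ∧ (∀ ω, θ ω ≤ σ' ω) ∧ σ' =ᵐ[μ] σ :=
  ⟨fun ω => max (σ ω) (θ ω),
    ⟨by simpa only [WithTop.coe_max] using hσ.1.max hθ.1,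
      fun ω => ⟨(hσ.2 ω).1.trans (le_max_left _ _), max_le (hσ.2 ω).2 (hθ.2 ω).2⟩⟩,
    fun _ => le_max_right _ _, h.mono fun _ hω => max_eq_left hω⟩

theorem MemT0.piecewise {σ₁ σ₂ θ : Ω → ℝ} {A : Set Ω} [DecidablePred (· ∈ A)]
    (h₁ : MemT0 𝓕 T σ₁) (h₂ : MemT0 𝓕 T σ₂) (hθ : IsStoppingTime 𝓕 fun ω => (θ ω : WithTop ℝ))
    (hθ₁ : ∀ ω, θ ω ≤ σ₁ ω) (hθ₂ : ∀ ω, θ ω ≤ σ₂ ω) (hA : MeasurableSet[hθ.measurableSpace] A) :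
    MemT0 𝓕 T (A.piecewise σ₁ σ₂) := by
  refine ⟨?_, fun ω => ?_⟩
  · rw [← Set.piecewise_op (s := A) (f := σ₁) (g := σ₂) fun _ x => (x : WithTop ℝ)]
    exact h₁.1.piecewise_of_le_of_measurableSet h₂.1 hθ (fun ω => WithTop.coe_le_coe.2 (hθ₁ ω))
      (fun ω => WithTop.coe_le_coe.2 (hθ₂ ω)) hA
  · by_cases hω : ω ∈ A <;> simp [hω, h₁.2 ω, h₂.2 ω]

variable {φ : (Ω → ℝ) → Ω → ℝ}

theorem Admissible.ae_eq_of_ae_eq (hφ : Admissible 𝓕 T μ φ) {σ σ' : Ω → ℝ}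
    (hσ : MemT0 𝓕 T σ) (hσ' : MemT0 𝓕 T σ') (h : σ =ᵐ[μ] σ') : φ σ =ᵐ[μ] φ σ' := by
  filter_upwards [hφ.2 σ σ' hσ hσ', h] with ω hφω hω using hφω hω

theorem Admissible.ae_eq_piecewise (hφ : Admissible 𝓕 T μ φ) {σ₁ σ₂ : Ω → ℝ} {A : Set Ω}
    [DecidablePred (· ∈ A)] (h₁ : MemT0 𝓕 T σ₁) (h₂ : MemT0 𝓕 T σ₂)
    (h : MemT0 𝓕 T (A.piecewise σ₁ σ₂)) :
    φ (A.piecewise σ₁ σ₂) =ᵐ[μ] A.piecewise (φ σ₁) (φ σ₂) := by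
  filter_upwards [hφ.2 _ _ h h₁, hφ.2 _ _ h h₂] with ω hω₁ hω₂
  by_cases hω : ω ∈ A
  · rw [Set.piecewise_eq_of_mem _ _ _ hω]
    exact hω₁ (Set.piecewise_eq_of_mem _ _ _ hω)
  · rw [Set.piecewise_eq_of_notMem _ _ _ hω]
    exact hω₂ (Set.piecewise_eq_of_notMem _ _ _ hω)

theorem Admissible.directedOn_condExp (hφ : Admissible 𝓕 T μ φ)
    (hφ_int : ∀ τ, MemT0 𝓕 T τ → Integrable (φ τ) μ) {θ : Ω → ℝ} (hθ : MemT0 𝓕 T θ) :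
    DirectedOn (Function.onFun (· ≤ᵐ[μ] ·) fun σ => μ[φ σ | hθ.1.measurableSpace])
      {σ | MemT0 𝓕 T σ ∧ θ ≤ᵐ[μ] σ} := by
  classical
  set g := fun σ => μ[φ σ | hθ.1.measurableSpace]
  rintro σ₁ ⟨h₁, hθ₁⟩ σ₂ ⟨h₂, hθ₂⟩
  obtain ⟨τ₁, hτ₁, hθτ₁, hτσ₁⟩ := h₁.exists_ae_eq_forall_le hθ hθ₁
  obtain ⟨τ₂, hτ₂, hθτ₂, hτσ₂⟩ := h₂.exists_ae_eq_forall_le hθ hθ₂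
  have hg₁ : g σ₁ =ᵐ[μ] g τ₁ := condExp_congr_ae (hφ.ae_eq_of_ae_eq h₁ hτ₁ hτσ₁.symm)
  have hg₂ : g σ₂ =ᵐ[μ] g τ₂ := condExp_congr_ae (hφ.ae_eq_of_ae_eq h₂ hτ₂ hτσ₂.symm)
  set A := {ω | g τ₂ ω ≤ g τ₁ ω}
  have hA : MeasurableSet[hθ.1.measurableSpace] A :=
    measurableSet_le stronglyMeasurable_condExp.measurable stronglyMeasurable_condExp.measurable
  have h₃ : MemT0 𝓕 T (A.piecewise τ₁ τ₂) := hτ₁.piecewise hτ₂ hθ.1 hθτ₁ hθτ₂ hA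
  have hg₃ : g (A.piecewise τ₁ τ₂) =ᵐ[μ] fun ω => max (g τ₁ ω) (g τ₂ ω) := by
    refine (condExp_congr_ae (hφ.ae_eq_piecewise hτ₁ hτ₂ h₃)).trans
      ((condExp_piecewise hA (hφ_int _ hτ₁) (hφ_int _ hτ₂)).trans (ae_of_all _ fun ω => ?_))
    by_cases hω : ω ∈ A
    · rw [Set.piecewise_eq_of_mem _ _ _ hω]
      exact (max_eq_left hω).symm
    · rw [Set.piecewise_eq_of_notMem _ _ _ hω]
      exact (max_eq_right (le_of_not_ge (show ¬g τ₂ ω ≤ g τ₁ ω from hω))).symm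
  refine ⟨A.piecewise τ₁ τ₂, ⟨h₃, ae_of_all _ fun ω => ?_⟩, ?_, ?_⟩
  · by_cases hω : ω ∈ A <;> simp [hω, hθτ₁ ω, hθτ₂ ω]
  · filter_upwards [hg₁, hg₃] with ω hω₁ hω₃
    exact hω₁.trans_le (hω₃ ▸ le_max_left _ _)
  · filter_upwards [hg₂, hg₃] with ω hω₂ hω₃
    exact hω₂.trans_le (hω₃ ▸ le_max_right _ _)

end StoppingTimes

theorem value_family_supermartingale_system_general
    {m0 : MeasurableSpace Ω} (μ : Measure Ω) [IsProbabilityMeasure μ]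
    (𝓕 : Filtration ℝ m0) (T : ℝ)
    (hFnull : ∀ A : Set Ω, μ A = 0 → MeasurableSet[𝓕 0] A)
    (φ : (Ω → ℝ) → Ω → ℝ)
    (hφ : Admissible 𝓕 T μ φ)
    (hφint : ∀ τ, MemT0 𝓕 T τ → Integrable (φ τ) μ)
    (V : (Ω → ℝ) → Ω → ℝ)
    (hV : ∀ S (hS : MemT0 𝓕 T S),
      IsEssSupFam μ (fun θ => MemT0 𝓕 T θ ∧ S ≤ᵐ[μ] θ)
        (fun θ => μ[φ θ | hS.1.measurableSpace]) (V S)) :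
    ∀ S, MemT0 𝓕 T S →
      ∀ θ θ' (_hθ : MemT0 𝓕 T θ) (hθ' : MemT0 𝓕 T θ'),
        S ≤ᵐ[μ] θ → S ≤ᵐ[μ] θ' → θ' ≤ᵐ[μ] θ →
        μ[V θ | hθ'.1.measurableSpace] ≤ᵐ[μ] V θ' := by
  intro _ _ θ θ' hθ hθ' _ _ hθ'θ
  have hm : hθ'.1.measurableSpace ≤ hθ.1.measurableSpace :=
    hθ'.1.measurableSpace_le_of_ae_le hFnull hθ.1 (fun ω => WithTop.coe_le_coe.2 (hθ.2 ω).1)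
      (hθ'θ.mono fun _ h => WithTop.coe_le_coe.2 h)
  by_cases hV_int : Integrable (V θ) μ
  · refine (hV θ hθ).condExp_ae_le hθ'.1.measurableSpace_le hV_int
      (fun _ _ => integrable_condExp) (hφ.directedOn_condExp hφint hθ) ⟨θ, hθ, EventuallyLE.rfl⟩
      fun σ hσ => ?_
    exact (condExp_condExp_of_le hm hθ.1.measurableSpace_le).trans_le
      ((hV θ' hθ').1 σ ⟨hσ.1, hθ'θ.trans hσ.2⟩)
  · rw [condExp_of_not_integrable hV_int]
    exact (condExp_nonneg (ae_of_all _ (hφ.1 θ' hθ').2)).trans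
      ((hV θ' hθ').1 θ' ⟨hθ', EventuallyLE.rfl⟩)

/-- The value-function family `{v(S), S ∈ T_0}`, where
`v(S) = ess sup_{θ ∈ T_S} E[φ(θ) | F_S]`, is a supermartingale system: for any
`S ∈ T_0` and `θ, θ' ∈ T_S` with `θ ≥ θ'` a.s., `E[v(θ) | F_{θ'}] ≤ v(θ')` a.s. -/
theorem value_family_supermartingale_system
    {m0 : MeasurableSpace Ω} (μ : Measure Ω) [IsProbabilityMeasure μ]
    (𝓕 : Filtration ℝ m0) (T : ℝ) (hT : 0 ≤ T)
    (hFright : ∀ t : ℝ, 𝓕 t = ⨅ s ∈ Set.Ioi t, 𝓕 s)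
    (hFnull : ∀ A : Set Ω, μ A = 0 → MeasurableSet[𝓕 0] A)
    (φ : (Ω → ℝ) → Ω → ℝ)
    (hφ : Admissible 𝓕 T μ φ)
    (hφint : ∀ τ, MemT0 𝓕 T τ → Integrable (φ τ) μ)
    (V : (Ω → ℝ) → Ω → ℝ)
    (hV : ∀ S (hS : MemT0 𝓕 T S),
      IsEssSupFam μ (fun θ => MemT0 𝓕 T θ ∧ S ≤ᵐ[μ] θ)
        (fun θ => μ[φ θ | hS.1.measurableSpace]) (V S)) :
    ∀ S, MemT0 𝓕 T S →
      ∀ θ θ' (_hθ : MemT0 𝓕 T θ) (hθ' : MemT0 𝓕 T θ'),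
        S ≤ᵐ[μ] θ → S ≤ᵐ[μ] θ' → θ' ≤ᵐ[μ] θ →
        μ[V θ | hθ'.1.measurableSpace] ≤ᵐ[μ] V θ' :=
  value_family_supermartingale_system_general μ 𝓕 T hFnull φ hφ hφint V hV
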